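/- For every integer n ≥ 1, the sum p_n = Σ_{i=0}^{3n−1} (−2)^i C(i+n−1, n−1) C(6n−2−i, 3n−1) is strictly positive. -/

import Mathlib

/-!
Put `W = (1 - X)³ (1 + 2X)` and `G = W⁻¹ = (1 + 2X)⁻¹ (1 - X)⁻³`. Then `p_{m+1}` is the
coefficient `q m` of `X ^ (3m + 2)` in `G ^ (m + 1)`. Creative telescoping (done by computer
algebra) yields polynomials `a₀, a₁, a₂` in `m` (`recCoeff₀, recCoeff₁, recCoeff₂`) and
a polynomial `U = certificate m` such that
`a₀ X⁶ G^(m+1) + a₁ X³ G^(m+2) + a₂ G^(m+3) = (X d/dX - N) V` with `N = 3m + 8` and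
`V = (1 - X)(1 + 2X) U G^(m+3)`. The operator `X d/dX - N` kills the coefficient of `X ^ N`,
so `a₀ q m + a₁ q (m+1) + a₂ q (m+2) = 0`. Since `a₀, a₁ < 0 < a₂` for `m ≥ 0` and
`q 0 = 4`, `q 1 = 36`, positivity propagates by induction.
-/

open PowerSeries Finset

section GeometricSeries

variable {R : Type*} [CommRing R]

theorem PowerSeries.mk_pow_mul_one_sub_C_mul_X (a : R) : mk (a ^ ·) * (1 - C a * X) = 1 := by
  simpa [rescale_mk, rescale_X] using congrArg (rescale a) (mk_one_mul_one_sub_eq_one R)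

theorem PowerSeries.mk_pow_pow_succ (a : R) (d : ℕ) :
    mk (a ^ ·) ^ (d + 1) = mk fun n => a ^ n * (d + n).choose d := by
  simpa [rescale_mk] using congrArg (rescale a) (mk_one_pow_eq_mk_choose_add R d)

end GeometricSeries

theorem Derivation.mul_map_pow_of_mul_eq_one {R A : Type*} [CommSemiring R] [CommRing A]
    [Algebra R A] (D : Derivation R A A) {w g : A} (h : w * g = 1) (k : ℕ) :
    w * D (g ^ k) = -(k * D w * g ^ k) := by
  have hg : w * D g = -(D w * g) := by
    have := congrArg D h
    rw [Derivation.leibniz, Derivation.map_one_eq_zero, smul_eq_mul, smul_eq_mul] at this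
    linear_combination this
  rw [Derivation.leibniz_pow, nsmul_eq_mul, smul_eq_mul]
  cases k with
  | zero => simp
  | succ j =>
    rw [Nat.add_sub_cancel]
    push_cast
    linear_combination ((j + 1 : A) * g ^ j) * hg

theorem PowerSeries.coeff_X_mul_derivative {R : Type*} [CommSemiring R] (f : R⟦X⟧) (n : ℕ) :
    coeff n (X * d⁄dX R f) = n * coeff n f := by
  cases n with
  | zero => simp
  | succ n => rw [coeff_succ_X_mul, coeff_derivative]; push_cast; ring

namespace AlternatingBinomialSum

noncomputable def W : ℤ⟦X⟧ := (1 - X) ^ 3 * (1 + 2 * X)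

noncomputable def G : ℤ⟦X⟧ := mk ((-2) ^ ·) * mk (1 ^ ·) ^ 3

theorem W_mul_G : W * G = 1 := by
  have h₁ := mk_pow_mul_one_sub_C_mul_X (1 : ℤ)
  have h₂ := mk_pow_mul_one_sub_C_mul_X (-2 : ℤ)
  simp only [map_one, one_mul, map_neg, map_ofNat, neg_mul, sub_neg_eq_add] at h₁ h₂
  set a := mk ((1 : ℤ) ^ ·) * (1 - X)
  unfold W G
  linear_combination (a ^ 2 + a + 1) * (mk ((-2 : ℤ) ^ ·) * (1 + 2 * X)) * h₁ + h₂

theorem W_pow_mul_G_pow_add (k n : ℕ) : W ^ k * G ^ (n + k) = G ^ n := by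
  rw [pow_add, mul_left_comm, ← mul_pow, W_mul_G, one_pow, mul_one]

theorem derivative_W : d⁄dX ℤ W = -((1 - X) ^ 2 * (1 + 8 * X)) := by
  have h2 : d⁄dX ℤ (2 : ℤ⟦X⟧) = 0 := by exact_mod_cast (d⁄dX ℤ).map_natCast 2
  simp [W, Derivation.leibniz, Derivation.leibniz_pow, h2]
  ring

theorem one_sub_X_mul_one_add_two_X_mul_derivative_G_pow (k : ℕ) :
    (1 - X) * (1 + 2 * X) * d⁄dX ℤ (G ^ k) = (k : ℤ⟦X⟧) * (1 + 8 * X) * G ^ k := by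
  have h := (d⁄dX ℤ).mul_map_pow_of_mul_eq_one W_mul_G k
  rw [derivative_W] at h
  have hX : (1 - X : ℤ⟦X⟧) ^ 2 ≠ 0 := pow_ne_zero 2 fun h0 => by
    simpa using congrArg (constantCoeff (R := ℤ)) h0
  refine mul_left_cancel₀ hX ?_
  unfold W at h
  linear_combination h

noncomputable def q (m : ℕ) : ℤ := coeff (3 * m + 2) (G ^ (m + 1))

theorem G_pow_succ (m : ℕ) :
    G ^ (m + 1) = (mk fun n => (-2 : ℤ) ^ n * (m + n).choose m) *
      mk fun n => (1 : ℤ) ^ n * (3 * m + 2 + n).choose (3 * m + 2) := by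
  rw [G, mul_pow, ← pow_mul, show 3 * (m + 1) = 3 * m + 2 + 1 by ring, mk_pow_pow_succ,
    mk_pow_pow_succ]

theorem q_eq_sum (m : ℕ) :
    q m = ∑ i ∈ range (3 * (m + 1)), (-2 : ℤ) ^ i *
      ((i + (m + 1) - 1).choose (m + 1 - 1) : ℤ) *
      ((6 * (m + 1) - 2 - i).choose (3 * (m + 1) - 1) : ℤ) := by
  rw [q, G_pow_succ, coeff_mul, Nat.sum_antidiagonal_eq_sum_range_succ_mk,
    show (3 * m + 2).succ = 3 * (m + 1) by omega]
  refine sum_congr rfl fun i hi => ?_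
  have hi : i < 3 * (m + 1) := mem_range.mp hi
  simp only [coeff_mk, one_pow, one_mul, Nat.add_sub_cancel, add_comm m i]
  congr 3
  omega

theorem q_zero : q 0 = 4 := by
  rw [q_eq_sum]; decide

theorem q_one : q 1 = 36 := by
  rw [q_eq_sum]; decide

def recCoeff₀ (m : ℤ) : ℤ :=
  -(448 * (7 * m + 6) * (7 * m + 8) * (7 * m + 9) * (7 * m + 10) * (7 * m + 11) * (7 * m + 12) *
    (1247 * m ^ 2 + 5858 * m + 6876))

def recCoeff₁ (m : ℤ) : ℤ :=
  -(48 * (m + 1) * (3 * m + 4) * (3 * m + 5) *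
    (496306 * m ^ 5 + 4564861 * m ^ 4 + 16474064 * m ^ 3 + 29154467 * m ^ 2 + 25276620 * m +
      8592507))

def recCoeff₂ (m : ℤ) : ℤ :=
  729 * (m + 1) * (m + 2) * (3 * m + 4) * (3 * m + 5) * (3 * m + 7) * (3 * m + 8) *
    (1247 * m ^ 2 + 3364 * m + 2265)

noncomputable def certificate (m : ℤ) : ℤ⟦X⟧ :=
    C (-462331800 - 2202447510 * m - 4445942823 * m ^ 2 - 4929659109 * m ^ 3 -
      3242147310 * m ^ 4 - 1264523400 * m ^ 5 - 270752787 * m ^ 6 - 24544701 * m ^ 7) +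
    C (264189600 + 1277412120 * m + 2622347136 * m ^ 2 + 2963354382 * m ^ 3 +
      1991120616 * m ^ 4 + 795575196 * m ^ 5 + 175047480 * m ^ 6 + 16363134 * m ^ 7) * X +
    C (-2906085600 - 13567185720 * m - 26768085876 * m ^ 2 - 28923571206 * m ^ 3 -
      18476981280 * m ^ 4 - 6975154620 * m ^ 5 - 1440209484 * m ^ 6 - 125450694 * m ^ 7) * X ^ 2 +
    C (4608684864 + 21980281104 * m + 44326693464 * m ^ 2 + 48969536808 * m ^ 3 +
      31984746120 * m ^ 4 + 12342394248 * m ^ 5 + 2603550864 * m ^ 6 + 231463152 * m ^ 7) * X ^ 3 +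
    C (-26463057696 - 117573467544 * m - 220486599072 * m ^ 2 - 226362037188 * m ^ 3 -
      137469319944 * m ^ 4 - 49405826232 * m ^ 5 - 9733567656 * m ^ 6 -
      811213404 * m ^ 7) * X ^ 4 +
    C (37838041920 + 177463752624 * m + 346899943728 * m ^ 2 + 367666851856 * m ^ 3 +
      228766965480 * m ^ 4 + 83728646344 * m ^ 5 + 16717377816 * m ^ 6 +
      1406566120 * m ^ 7) * X ^ 5 +
    C (547355563776 + 2418355801152 * m + 4534669891776 * m ^ 2 + 4676081351456 * m ^ 3 +
      2862694738056 * m ^ 4 + 1040025059960 * m ^ 5 + 207536656296 * m ^ 6 +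
      17542406936 * m ^ 7) * X ^ 6 +
    C (-1451186731008 - 6490508216832 * m - 12297250669824 * m ^ 2 -
      12792177063936 * m ^ 3 - 7889015112000 * m ^ 4 - 2883664623264 * m ^ 5 -
      578353469088 * m ^ 6 - 49090778688 * m ^ 7) * X ^ 7 +
    C (9323195904 + 171462526848 * m + 539155130496 * m ^ 2 + 755409010240 * m ^ 3 +
      570638425584 * m ^ 4 + 242021209936 * m ^ 5 + 54390666960 * m ^ 6 +
      5049551920 * m ^ 7) * X ^ 8 +
    C (3783300618240 + 16650024841728 * m + 31098415348992 * m ^ 2 +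
      31943450887424 * m ^ 3 + 19480566275904 * m ^ 4 + 7050687801248 * m ^ 5 +
      1401829641408 * m ^ 6 + 118078370144 * m ^ 7) * X ^ 9 +
    C (-5159996835840 - 22808446207488 * m - 42768504103680 * m ^ 2 -
      44085226202880 * m ^ 3 - 26969604236736 * m ^ 4 - 9788516236128 * m ^ 5 -
      1950997895616 * m ^ 6 - 164696537376 * m ^ 7) * X ^ 10 +
    C (2844010414080 + 12583106666496 * m + 23614697515008 * m ^ 2 +
      24360018737152 * m ^ 3 + 14912458229760 * m ^ 4 + 5415629787904 * m ^ 5 +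
      1079982554112 * m ^ 6 + 91210647808 * m ^ 7) * X ^ 11 +
    C (-585531555840 - 2590639607808 * m - 4861849488384 * m ^ 2 -
      5015297975296 * m ^ 3 - 3070211988480 * m ^ 4 - 1114982603392 * m ^ 5 -
      222349349376 * m ^ 6 - 18778662784 * m ^ 7) * X ^ 12

set_option maxRecDepth 1000 in
theorem certificate_spec (m : ℤ) :
    C (recCoeff₀ m) * X ^ 6 * W ^ 2 + C (recCoeff₁ m) * X ^ 3 * W + C (recCoeff₂ m) =
      X * d⁄dX ℤ ((1 - X) * (1 + 2 * X) * certificate m) +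
        C (m + 3) * X * (1 + 8 * X) * certificate m -
        C (3 * m + 8) * ((1 - X) * (1 + 2 * X) * certificate m) := by
  have h2 : d⁄dX ℤ (2 : ℤ⟦X⟧) = 0 := by exact_mod_cast (d⁄dX ℤ).map_natCast 2
  simp only [certificate, W, Derivation.leibniz, Derivation.leibniz_pow, map_add, map_sub,
    Derivation.map_one_eq_zero, derivative_C, derivative_X, h2, smul_eq_mul, nsmul_eq_mul]
  simp only [recCoeff₀, recCoeff₁, recCoeff₂, map_add, map_mul, map_pow, map_neg,
    map_ofNat, map_one]
  ring

theorem telescoping_identity (m : ℕ) :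
    C (recCoeff₀ m) * (X ^ 6 * G ^ (m + 1)) + C (recCoeff₁ m) * (X ^ 3 * G ^ (m + 2)) +
        C (recCoeff₂ m) * G ^ (m + 3) =
      X * d⁄dX ℤ ((1 - X) * (1 + 2 * X) * certificate m * G ^ (m + 3)) -
        C (3 * (m : ℤ) + 8) * ((1 - X) * (1 + 2 * X) * certificate m * G ^ (m + 3)) := by
  have hG := one_sub_X_mul_one_add_two_X_mul_derivative_G_pow (m + 3)
  rw [show ((m + 3 : ℕ) : ℤ⟦X⟧) = C ((m : ℤ) + 3) by simp] at hG
  rw [Derivation.leibniz, smul_eq_mul, smul_eq_mul]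
  linear_combination G ^ (m + 3) * certificate_spec m -
    C (recCoeff₀ m) * X ^ 6 * W_pow_mul_G_pow_add 2 (m + 1) -
    C (recCoeff₁ m) * X ^ 3 * W_pow_mul_G_pow_add 1 (m + 2) - X * certificate m * hG

theorem recurrence (m : ℕ) :
    recCoeff₀ m * q m + recCoeff₁ m * q (m + 1) + recCoeff₂ m * q (m + 2) = 0 := by
  have h := congrArg (coeff (3 * m + 8)) (telescoping_identity m)
  rw [map_sub, coeff_X_mul_derivative, coeff_C_mul, map_add, map_add, coeff_C_mul, coeff_C_mul,
    coeff_C_mul, show 3 * m + 8 = 3 * m + 2 + 6 by ring, coeff_X_pow_mul,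
    show 3 * m + 2 + 6 = 3 * m + 5 + 3 by ring, coeff_X_pow_mul] at h
  have e₁ : q (m + 1) = coeff (3 * m + 5) (G ^ (m + 2)) := rfl
  have e₂ : q (m + 2) = coeff (3 * m + 5 + 3) (G ^ (m + 3)) := rfl
  rw [q, e₁, e₂, h]
  push_cast
  ring

theorem recCoeff₀_neg (m : ℕ) : recCoeff₀ m < 0 := by
  rw [recCoeff₀, neg_neg_iff_pos]; positivity

theorem recCoeff₁_neg (m : ℕ) : recCoeff₁ m < 0 := by
  rw [recCoeff₁, neg_neg_iff_pos]; positivity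

theorem recCoeff₂_pos (m : ℕ) : 0 < recCoeff₂ m := by
  rw [recCoeff₂]; positivity

theorem q_pos (m : ℕ) : 0 < q m := by
  suffices h : 0 < q m ∧ 0 < q (m + 1) from h.1
  induction m with
  | zero => simp [q_zero, q_one]
  | succ m ih =>
    refine ⟨ih.2, pos_of_mul_pos_right (a := recCoeff₂ m) ?_ (recCoeff₂_pos m).le⟩
    linarith [recurrence m, mul_neg_of_neg_of_pos (recCoeff₀_neg m) ih.1,
      mul_neg_of_neg_of_pos (recCoeff₁_neg m) ih.2]

end AlternatingBinomialSum

open Finset in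
/-- For every integer `n ≥ 1`,
`p_n = Σ_{i=0}^{3n−1} (−2)^i C(i+n−1, n−1) C(6n−2−i, 3n−1) > 0`. -/
theorem stmt_8 (n : ℕ) (hn : 1 ≤ n) :
    0 < ∑ i ∈ range (3 * n), (-2 : ℤ) ^ i *
          (Nat.choose (i + n - 1) (n - 1) : ℤ) *
          (Nat.choose (6 * n - 2 - i) (3 * n - 1) : ℤ) := by
  obtain ⟨m, rfl⟩ : ∃ m, n = m + 1 := ⟨n - 1, by omega⟩
  exact AlternatingBinomialSum.q_eq_sum m ▸ AlternatingBinomialSum.q_pos m
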